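/- arXiv:math/0102120 — 2 statements merged into one kernel-verified Lean document; each statement's English description precedes it below -/
import Mathlib

section
/- Associativity of the cotensor product: Let C' be an A'-coring, C an A-coring, C'' an A''-coring, C''' an A'''-coring, and let L be a (C''',C')-bicomodule, M a (C',C)-bicomodule, and N a (C,C'')-bicomodule. Assume that C' (as right A'-module), L, and L ⊗_{A'} C' (as right A'-modules), and C'' (as left A''-module) preserve the equalizer of (ρ_M ⊗_A N, M ⊗_A λ_N), and that C, N, C ⊗_A N (as left A-modules) and C''' (as right A'''-module) preserve the equalizer of (ρ_L ⊗_{A'} M, L ⊗_{A'} λ_M). Then there is a canonical isomorphism of (C''',C'')-bicomodules L □_{C'} (M □_C N) ≅ (L □_{C'} M) □_C N. -/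
/-! # Preamble: corings and comodules
We follow "Separable functors in corings" (J. Gómez-Torrecillas).
`K`-algebras are monoid objects in `ModuleCat K`; a `T`-`A`-bimodule is a
1-morphism `T ⟶ A` in the bicategory of algebras and bimodules, whose
composition is the tensor product over the middle algebra. -/

open CategoryTheory Limits Bicategory

noncomputable section
universe u

namespace CoringSep

variable (K : Type u) [CommRing K]

open MonoidalCategory in
instance (X : ModuleCat.{u} K) : PreservesColimitsOfSize.{0,0} (tensorLeft X) := by
  have : PreservesColimits (tensorLeft X) := (ihom.adjunction X).leftAdjoint_preservesColimits
  exact preservesSmallestColimits_of_preservesColimits _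

open MonoidalCategory in
instance (X : ModuleCat.{u} K) : PreservesColimitsOfSize.{0,0} (tensorRight X) := by
  have : PreservesColimits (tensorRight X) :=
    preservesColimits_of_natIso
      (NatIso.ofComponents (fun Y => β_ X Y) (fun f => by simp) :
        tensorLeft X ≅ tensorRight X)
  exact preservesSmallestColimits_of_preservesColimits _

/-- `K`-algebras (as monoid objects in `K`-modules), wrapped so that they form
a bicategory whose 1-morphisms `A ⟶ B` are `A`-`B`-bimodules and where
composition of 1-morphisms is `⊗_B`. -/
structure Alg where
  val : Mon (ModuleCat.{u} K)

variable {K}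

instance : Bicategory (Alg K) where
  Hom X Y := Bimod X.val Y.val
  homCategory X Y := (inferInstance : Category (Bimod X.val Y.val))
  id X := Bimod.regular X.val
  comp M N := M.tensorBimod N
  whiskerLeft L _ _ f := Bimod.whiskerLeft L f
  whiskerRight f N := Bimod.whiskerRight f N
  associator := Bimod.associatorBimod
  leftUnitor := Bimod.leftUnitorBimod
  rightUnitor := Bimod.rightUnitorBimod
  whiskerLeft_id _ _ := Bimod.whiskerLeft_id_bimod
  whiskerLeft_comp M _ _ _ f g := Bimod.whiskerLeft_comp_bimod M f g
  id_whiskerLeft := Bimod.id_whiskerLeft_bimod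
  comp_whiskerLeft M N _ _ f := Bimod.comp_whiskerLeft_bimod M N f
  id_whiskerRight _ _ := Bimod.id_whiskerRight_bimod
  comp_whiskerRight f g Q := Bimod.comp_whiskerRight_bimod f g Q
  whiskerRight_id := Bimod.whiskerRight_id_bimod
  whiskerRight_comp := Bimod.whiskerRight_comp_bimod
  whisker_assoc M _ _ f P := Bimod.whisker_assoc_bimod M f P
  whisker_exchange := Bimod.whisker_exchange_bimod
  pentagon := Bimod.pentagon_bimod
  triangle := Bimod.triangle_bimod

variable (K) in
/-- The base ring `K`, as a `K`-algebra; right `A`-modules are the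
1-morphisms `base K ⟶ A`. -/
def base : Alg K := ⟨Mon.trivial (ModuleCat.{u} K)⟩

variable {a b s t : Alg K}

/-- An `A`-coring: an `A`-bimodule `X` together with a coassociative,
counital `A`-bimodule comultiplication `X ⟶ X ⊗_A X`. -/
structure Coring (a : Alg K) where
  X : a ⟶ a
  comul : X ⟶ X ≫ X
  counit : X ⟶ 𝟙 a
  coassoc : comul ≫ comul ▷ X ≫ (α_ X X X).hom = comul ≫ X ◁ comul
  comul_counit : comul ≫ X ◁ counit ≫ (ρ_ X).hom = 𝟙 X
  counit_comul : comul ≫ counit ▷ X ≫ (λ_ X).hom = 𝟙 X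

/-- A right `C`-comodule which is a `T`-`A`-bimodule with `T`-linear coaction;
plain right `C`-comodules are obtained for `T = base K`. -/
structure RightComodule (t : Alg K) {a : Alg K} (C : Coring a) where
  M : t ⟶ a
  coact : M ⟶ M ≫ C.X
  coassoc : coact ≫ coact ▷ C.X ≫ (α_ M C.X C.X).hom = coact ≫ M ◁ C.comul
  counit : coact ≫ M ◁ C.counit ≫ (ρ_ M).hom = 𝟙 M

/-- A left `C`-comodule which is an `A`-`S`-bimodule with `S`-linear coaction. -/
structure LeftComodule {a : Alg K} (C : Coring a) (s : Alg K) where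
  M : a ⟶ s
  coact : M ⟶ C.X ≫ M
  coassoc : coact ≫ C.comul ▷ M ≫ (α_ C.X C.X M).hom = coact ≫ C.X ◁ coact
  counit : coact ≫ C.counit ▷ M ≫ (λ_ M).hom = 𝟙 M

/-- A `C'`-`C`-bicomodule. -/
structure Bicomodule {a' a : Alg K} (C' : Coring a') (C : Coring a) where
  M : a' ⟶ a
  rcoact : M ⟶ M ≫ C.X
  lcoact : M ⟶ C'.X ≫ M
  rcoassoc : rcoact ≫ rcoact ▷ C.X ≫ (α_ M C.X C.X).hom = rcoact ≫ M ◁ C.comul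
  rcounit : rcoact ≫ M ◁ C.counit ≫ (ρ_ M).hom = 𝟙 M
  lcoassoc : lcoact ≫ C'.comul ▷ M ≫ (α_ C'.X C'.X M).hom = lcoact ≫ C'.X ◁ lcoact
  lcounit : lcoact ≫ C'.counit ▷ M ≫ (λ_ M).hom = 𝟙 M
  compat : rcoact ≫ lcoact ▷ C.X ≫ (α_ C'.X M C.X).hom = lcoact ≫ C'.X ◁ rcoact

variable {C : Coring a}

/-- The right comodule underlying a bicomodule. -/
def Bicomodule.toRight {a' : Alg K} {C' : Coring a'} (M : Bicomodule C' C) :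
    RightComodule a' C := ⟨M.M, M.rcoact, M.rcoassoc, M.rcounit⟩

/-- The left comodule underlying a bicomodule. -/
def Bicomodule.toLeft {a' : Alg K} {C' : Coring a'} (M : Bicomodule C' C) :
    LeftComodule C' a := ⟨M.M, M.lcoact, M.lcoassoc, M.lcounit⟩

/-- The coring `C`, considered as a right comodule over itself. -/
def coregular (C : Coring a) : RightComodule a C :=
  ⟨C.X, C.comul, C.coassoc, C.comul_counit⟩

/-- Morphisms of right `C`-comodules. -/
@[ext] structure ComodHom (M N : RightComodule t C) where
  f : M.M ⟶ N.M
  colinear : M.coact ≫ f ▷ C.X = f ≫ N.coact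

instance : Category (RightComodule t C) where
  Hom := ComodHom
  id M := ⟨𝟙 M.M, by simp⟩
  comp f g := ⟨f.f ≫ g.f, by
    rw [Bicategory.comp_whiskerRight, ← Category.assoc, f.colinear, Category.assoc, g.colinear,
      Category.assoc]⟩

@[simp] theorem comod_id_f (M : RightComodule t C) : (𝟙 M : ComodHom M M).f = 𝟙 M.M := rfl
@[simp] theorem comod_comp_f {M N P : RightComodule t C} (f : M ⟶ N) (g : N ⟶ P) :
    (f ≫ g).f = f.f ≫ g.f := rfl

@[ext] theorem comodHom_ext' {M N : RightComodule t C} (f g : M ⟶ N) (h : f.f = g.f) : f = g :=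
  ComodHom.ext h

/-- The category of (plain) right comodules over a coring. -/
abbrev Comod (C : Coring a) := RightComodule (base K) C

/-- The forgetful functor from right `C`-comodules to the underlying
bimodule (module) category. -/
def forgetComod (t : Alg K) (C : Coring a) : RightComodule t C ⥤ (t ⟶ a) where
  obj M := M.M
  map f := f.f

/-- The functor `- ⊗_A N` given by postcomposition with a 1-morphism (an
`A`-`S`-bimodule) `N`. -/
def postF (t : Alg K) (N : a ⟶ s) : (t ⟶ a) ⥤ (t ⟶ s) where
  obj M := M ≫ N
  map f := f ▷ N

/-- The functor `W ⊗_A -` given by precomposition with a `T`-`A`-bimodule `W`. -/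
def preF (W : t ⟶ a) (s : Alg K) : (a ⟶ s) ⥤ (t ⟶ s) where
  obj N := W ≫ N
  map f := W ◁ f

/-- A functor *preserves the equalizer* of a pair `(f, g)` if it sends any
equalizer fork of `(f, g)` to a limit cone. -/
def PreservesEqualizerOf {𝒞 𝒟 : Type*} [Category 𝒞] [Category 𝒟] (F : 𝒞 ⥤ 𝒟)
    {X Y : 𝒞} (f g : X ⟶ Y) : Prop :=
  ∀ c : Fork f g, IsLimit c → Nonempty (IsLimit (F.mapCone c))

/-- `N` is flat as a left `A`-module: `- ⊗_A N` preserves all equalizers of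
right `A`-module maps. -/
def LeftFlat (N : a ⟶ s) : Prop :=
  ∀ (t : Alg K) {X Y : t ⟶ a} (f g : X ⟶ Y), PreservesEqualizerOf (postF t N) f g

/-- `W` is flat as a right `A`-module: `W ⊗_A -` preserves all equalizers of
left `A`-module maps. -/
def RightFlat (W : t ⟶ a) : Prop :=
  ∀ (s : Alg K) {X Y : a ⟶ s} (f g : X ⟶ Y), PreservesEqualizerOf (preF W s) f g

section Cotensor

/-- The first map `ρ_M ⊗_A N` in the equalizer diagram defining the cotensor
product `M □_C N`. -/
def cotensorFst (M : RightComodule t C) (N : LeftComodule C s) :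
    M.M ≫ N.M ⟶ (M.M ≫ C.X) ≫ N.M :=
  M.coact ▷ N.M

/-- The second map `M ⊗_A λ_N` in the equalizer diagram defining `M □_C N`. -/
def cotensorSnd (M : RightComodule t C) (N : LeftComodule C s) :
    M.M ≫ N.M ⟶ (M.M ≫ C.X) ≫ N.M :=
  M.M ◁ N.coact ≫ (α_ M.M C.X N.M).inv

/-- A choice of cotensor product `M □_C N`: an equalizer of the pair
`(ρ_M ⊗_A N, M ⊗_A λ_N)` in the category of `T`-`S`-bimodules. -/
structure CotensorFork (M : RightComodule t C) (N : LeftComodule C s) where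
  pt : t ⟶ s
  ι : pt ⟶ M.M ≫ N.M
  w : ι ≫ cotensorFst M N = ι ≫ cotensorSnd M N
  isLimit : IsLimit (Fork.ofι ι w)

end Cotensor

/-- A functor `F` is *separable* if the natural transformation
`Hom(-,-) ⟶ Hom(F-,F-)` of bifunctors is a split monomorphism, i.e. admits a
retraction `ζ` natural in both variables. -/
def Functor.Separable {𝒞 𝒟 : Type*} [Category 𝒞] [Category 𝒟] (F : 𝒞 ⥤ 𝒟) : Prop :=
  ∃ ζ : ∀ X Y : 𝒞, (F.obj X ⟶ F.obj Y) → (X ⟶ Y),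
    (∀ (X Y : 𝒞) (f : X ⟶ Y), ζ X Y (F.map f) = f) ∧
    (∀ (X X' Y Y' : 𝒞) (x : X' ⟶ X) (y : Y ⟶ Y') (h : F.obj X ⟶ F.obj Y),
      ζ X' Y' (F.map x ≫ h ≫ F.map y) = x ≫ ζ X Y h ≫ y)

end CoringSep

namespace CoringSep
open CategoryTheory Limits Bicategory

attribute [reducible] Bicomodule.toRight Bicomodule.toLeft

/-- **associativity of the cotensor product.**  Let `C', C, C'',
C'''` be corings over `A', A, A'', A'''`, and let `L` be a `(C''',C')`-,
`M` a `(C',C)`- and `N` a `(C,C'')`-bicomodule.  Assume the preservation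
hypotheses of the statement.  Given cotensor products `M □_C N` (with its
induced left `C'`-comodule structure `lco`) and `L □_{C'} M` (with its induced
right `C`-comodule structure `rco`), and cotensor products
`L □_{C'} (M □_C N)` and `(L □_{C'} M) □_C N`, there is a canonical
isomorphism `L □_{C'} (M □_C N) ≅ (L □_{C'} M) □_C N`, i.e. one compatible
with the canonical inclusions into `L ⊗_{A'} M ⊗_A N`; being compatible, it
is automatically an isomorphism of `(C''',C'')`-bicomodules. -/
theorem statement5 {K : Type u} [CommRing K] {a a' a'' a''' : Alg K}
    {C : Coring a} {C' : Coring a'} {C'' : Coring a''} {C''' : Coring a'''}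
    (L : Bicomodule C''' C') (M : Bicomodule C' C) (N : Bicomodule C C'')
    -- the two inner cotensor products
    (cfMN : CotensorFork M.toRight N.toLeft) (cfLM : CotensorFork L.toRight M.toLeft)
    -- preservation hypotheses for the equalizer defining `M □_C N`
    (h1 : PreservesEqualizerOf (preF C'.X a'')
      (cotensorFst M.toRight N.toLeft) (cotensorSnd M.toRight N.toLeft))
    (h2 : PreservesEqualizerOf (preF L.M a'')
      (cotensorFst M.toRight N.toLeft) (cotensorSnd M.toRight N.toLeft))
    (h3 : PreservesEqualizerOf (preF (L.M ≫ C'.X) a'')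
      (cotensorFst M.toRight N.toLeft) (cotensorSnd M.toRight N.toLeft))
    (h4 : PreservesEqualizerOf (postF a' C''.X)
      (cotensorFst M.toRight N.toLeft) (cotensorSnd M.toRight N.toLeft))
    -- preservation hypotheses for the equalizer defining `L □_{C'} M`
    (h5 : PreservesEqualizerOf (postF a''' C.X)
      (cotensorFst L.toRight M.toLeft) (cotensorSnd L.toRight M.toLeft))
    (h6 : PreservesEqualizerOf (postF a''' N.M)
      (cotensorFst L.toRight M.toLeft) (cotensorSnd L.toRight M.toLeft))
    (h7 : PreservesEqualizerOf (postF a''' (C.X ≫ N.M))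
      (cotensorFst L.toRight M.toLeft) (cotensorSnd L.toRight M.toLeft))
    (h8 : PreservesEqualizerOf (preF C'''.X a)
      (cotensorFst L.toRight M.toLeft) (cotensorSnd L.toRight M.toLeft))
    -- the induced left `C'`-comodule structure on `M □_C N`
    (lco : cfMN.pt ⟶ C'.X ≫ cfMN.pt)
    (hlco : lco ≫ C'.X ◁ cfMN.ι =
      cfMN.ι ≫ M.lcoact ▷ N.M ≫ (α_ C'.X M.M N.M).hom)
    (lco1 : lco ≫ C'.comul ▷ cfMN.pt ≫ (α_ C'.X C'.X cfMN.pt).hom = lco ≫ C'.X ◁ lco)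
    (lco2 : lco ≫ C'.counit ▷ cfMN.pt ≫ (λ_ cfMN.pt).hom = 𝟙 cfMN.pt)
    -- the induced right `C`-comodule structure on `L □_{C'} M`
    (rco : cfLM.pt ⟶ cfLM.pt ≫ C.X)
    (hrco : rco ≫ cfLM.ι ▷ C.X =
      cfLM.ι ≫ L.M ◁ M.rcoact ≫ (α_ L.M M.M C.X).inv)
    (rco1 : rco ≫ rco ▷ C.X ≫ (α_ cfLM.pt C.X C.X).hom = rco ≫ cfLM.pt ◁ C.comul)
    (rco2 : rco ≫ cfLM.pt ◁ C.counit ≫ (ρ_ cfLM.pt).hom = 𝟙 cfLM.pt)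
    -- the two outer cotensor products
    (cfL : CotensorFork (L.toRight) (⟨cfMN.pt, lco, lco1, lco2⟩ : LeftComodule C' a''))
    (cfR : CotensorFork (⟨cfLM.pt, rco, rco1, rco2⟩ : RightComodule a''' C) N.toLeft) :
    ∃ φ : cfL.pt ≅ cfR.pt,
      φ.hom ≫ cfR.ι ≫ cfLM.ι ▷ N.M =
        cfL.ι ≫ L.M ◁ cfMN.ι ≫ (α_ L.M M.M N.M).inv := by
  -- explicit fork conditions
  have w1 : cfMN.ι ≫ M.rcoact ▷ N.M
      = cfMN.ι ≫ (M.M ◁ N.lcoact ≫ (α_ M.M C.X N.M).inv) := cfMN.w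
  have w2 : cfLM.ι ≫ L.rcoact ▷ M.M
      = cfLM.ι ≫ (L.M ◁ M.lcoact ≫ (α_ L.M C'.X M.M).inv) := cfLM.w
  have w3 : cfL.ι ≫ L.rcoact ▷ cfMN.pt
      = cfL.ι ≫ (L.M ◁ lco ≫ (α_ L.M C'.X cfMN.pt).inv) := cfL.w
  have w4 : cfR.ι ≫ rco ▷ N.M
      = cfR.ι ≫ (cfLM.pt ◁ N.lcoact ≫ (α_ cfLM.pt C.X N.M).inv) := cfR.w
  -- derived limits and monomorphisms
  have l6 := isLimitMapConeForkEquiv (postF a''' N.M) cfLM.w (h6 _ cfLM.isLimit).some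
  have l2 := isLimitMapConeForkEquiv (preF L.M a'') cfMN.w (h2 _ cfMN.isLimit).some
  have m7 : Mono (cfLM.ι ▷ (C.X ≫ N.M)) :=
    mono_of_isLimit_fork
      (isLimitMapConeForkEquiv (postF a''' (C.X ≫ N.M)) cfLM.w (h7 _ cfLM.isLimit).some)
  have m3 : Mono ((L.M ≫ C'.X) ◁ cfMN.ι) :=
    mono_of_isLimit_fork
      (isLimitMapConeForkEquiv (preF (L.M ≫ C'.X) a'') cfMN.w (h3 _ cfMN.isLimit).some)
  have m2 : Mono (L.M ◁ cfMN.ι) := mono_of_isLimit_fork l2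
  have m6 : Mono (cfLM.ι ▷ N.M) := mono_of_isLimit_fork l6
  -- exchange laws, stated with explicit (co)domains
  have he : L.M ◁ cfMN.ι ≫ L.rcoact ▷ (M.M ≫ N.M)
      = L.rcoact ▷ cfMN.pt ≫ (L.M ≫ C'.X) ◁ cfMN.ι :=
    Bicategory.whisker_exchange L.rcoact cfMN.ι
  have he2 : cfLM.ι ▷ N.M ≫ (L.M ≫ M.M) ◁ N.lcoact
      = cfLM.pt ◁ N.lcoact ≫ cfLM.ι ▷ (C.X ≫ N.M) :=
    (Bicategory.whisker_exchange cfLM.ι N.lcoact).symm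
  -- Claim A
  have wA : (cfL.ι ≫ L.M ◁ cfMN.ι ≫ (α_ L.M M.M N.M).inv) ≫ (L.rcoact ▷ M.M) ▷ N.M
      = (cfL.ι ≫ L.M ◁ cfMN.ι ≫ (α_ L.M M.M N.M).inv)
          ≫ (L.M ◁ M.lcoact ≫ (α_ L.M C'.X M.M).inv) ▷ N.M := by
    calc (cfL.ι ≫ L.M ◁ cfMN.ι ≫ (α_ L.M M.M N.M).inv) ≫ (L.rcoact ▷ M.M) ▷ N.M
        = cfL.ι ≫ L.M ◁ cfMN.ι ≫ L.rcoact ▷ (M.M ≫ N.M)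
            ≫ (α_ (L.M ≫ C'.X) M.M N.M).inv := by
          bicategory
      _ = cfL.ι ≫ L.rcoact ▷ cfMN.pt ≫ (L.M ≫ C'.X) ◁ cfMN.ι
            ≫ (α_ (L.M ≫ C'.X) M.M N.M).inv := by
          rw [reassoc_of% he]
      _ = cfL.ι ≫ L.M ◁ lco ≫ (α_ L.M C'.X cfMN.pt).inv ≫ (L.M ≫ C'.X) ◁ cfMN.ι
            ≫ (α_ (L.M ≫ C'.X) M.M N.M).inv := by
          rw [reassoc_of% w3]
      _ = cfL.ι ≫ L.M ◁ (lco ≫ C'.X ◁ cfMN.ι) ≫ (α_ L.M C'.X (M.M ≫ N.M)).inv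
            ≫ (α_ (L.M ≫ C'.X) M.M N.M).inv := by
          bicategory
      _ = cfL.ι ≫ L.M ◁ (cfMN.ι ≫ M.lcoact ▷ N.M ≫ (α_ C'.X M.M N.M).hom)
            ≫ (α_ L.M C'.X (M.M ≫ N.M)).inv ≫ (α_ (L.M ≫ C'.X) M.M N.M).inv := by
          rw [hlco]
      _ = (cfL.ι ≫ L.M ◁ cfMN.ι ≫ (α_ L.M M.M N.M).inv)
            ≫ (L.M ◁ M.lcoact ≫ (α_ L.M C'.X M.M).inv) ▷ N.M := by
          bicategory
  obtain ⟨g₁, hg₁⟩ :=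
    Fork.IsLimit.lift' l6 (cfL.ι ≫ L.M ◁ cfMN.ι ≫ (α_ L.M M.M N.M).inv) wA
  change cfL.pt ⟶ cfLM.pt ≫ N.M at g₁
  have hg₁' : g₁ ≫ cfLM.ι ▷ N.M
      = cfL.ι ≫ L.M ◁ cfMN.ι ≫ (α_ L.M M.M N.M).inv := hg₁
  -- Claim B
  have wB : g₁ ≫ rco ▷ N.M = g₁ ≫ (cfLM.pt ◁ N.lcoact ≫ (α_ cfLM.pt C.X N.M).inv) := by
    haveI := m7
    rw [← cancel_mono ((α_ cfLM.pt C.X N.M).hom ≫ cfLM.ι ▷ (C.X ≫ N.M))]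
    have ha : (α_ cfLM.pt C.X N.M).hom ≫ cfLM.ι ▷ (C.X ≫ N.M)
        = (cfLM.ι ▷ C.X) ▷ N.M ≫ (α_ (L.M ≫ M.M) C.X N.M).hom :=
      (Bicategory.associator_naturality_left cfLM.ι C.X N.M).symm
    have hr2 : rco ▷ N.M ≫ (cfLM.ι ▷ C.X) ▷ N.M
        = (cfLM.ι ≫ L.M ◁ M.rcoact ≫ (α_ L.M M.M C.X).inv) ▷ N.M := by
      rw [← Bicategory.comp_whiskerRight, hrco]
    calc (g₁ ≫ rco ▷ N.M) ≫ ((α_ cfLM.pt C.X N.M).hom ≫ cfLM.ι ▷ (C.X ≫ N.M))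
        = g₁ ≫ rco ▷ N.M ≫ (cfLM.ι ▷ C.X) ▷ N.M ≫ (α_ (L.M ≫ M.M) C.X N.M).hom := by
          rw [ha]; simp only [Category.assoc]
      _ = g₁ ≫ (cfLM.ι ≫ L.M ◁ M.rcoact ≫ (α_ L.M M.M C.X).inv) ▷ N.M
            ≫ (α_ (L.M ≫ M.M) C.X N.M).hom := by
          rw [reassoc_of% hr2]
      _ = g₁ ≫ cfLM.ι ▷ N.M ≫ (α_ L.M M.M N.M).hom ≫ L.M ◁ (M.rcoact ▷ N.M)
            ≫ (α_ L.M (M.M ≫ C.X) N.M).inv ≫ (α_ L.M M.M C.X).inv ▷ N.M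
            ≫ (α_ (L.M ≫ M.M) C.X N.M).hom := by
          bicategory
      _ = cfL.ι ≫ L.M ◁ cfMN.ι ≫ (α_ L.M M.M N.M).inv ≫ (α_ L.M M.M N.M).hom
            ≫ L.M ◁ (M.rcoact ▷ N.M) ≫ (α_ L.M (M.M ≫ C.X) N.M).inv
            ≫ (α_ L.M M.M C.X).inv ▷ N.M ≫ (α_ (L.M ≫ M.M) C.X N.M).hom := by
          rw [reassoc_of% hg₁']
      _ = cfL.ι ≫ L.M ◁ (cfMN.ι ≫ M.rcoact ▷ N.M) ≫ (α_ L.M (M.M ≫ C.X) N.M).inv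
            ≫ (α_ L.M M.M C.X).inv ▷ N.M ≫ (α_ (L.M ≫ M.M) C.X N.M).hom := by
          bicategory
      _ = cfL.ι ≫ L.M ◁ (cfMN.ι ≫ M.M ◁ N.lcoact ≫ (α_ M.M C.X N.M).inv)
            ≫ (α_ L.M (M.M ≫ C.X) N.M).inv ≫ (α_ L.M M.M C.X).inv ▷ N.M
            ≫ (α_ (L.M ≫ M.M) C.X N.M).hom := by
          rw [w1]
      _ = cfL.ι ≫ L.M ◁ cfMN.ι ≫ (α_ L.M M.M N.M).inv ≫ (L.M ≫ M.M) ◁ N.lcoact := by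
          bicategory
      _ = g₁ ≫ cfLM.ι ▷ N.M ≫ (L.M ≫ M.M) ◁ N.lcoact := by
          rw [← reassoc_of% hg₁']
      _ = (g₁ ≫ (cfLM.pt ◁ N.lcoact ≫ (α_ cfLM.pt C.X N.M).inv))
            ≫ ((α_ cfLM.pt C.X N.M).hom ≫ cfLM.ι ▷ (C.X ≫ N.M)) := by
          rw [he2]; simp only [Category.assoc, Iso.inv_hom_id_assoc]
  obtain ⟨φh, hφh⟩ := Fork.IsLimit.lift' cfR.isLimit g₁ wB
  have hφh' : φh ≫ cfR.ι = g₁ := hφh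
  -- Claim A'
  have hrco' : rco ≫ cfLM.ι ▷ C.X ≫ (α_ L.M M.M C.X).hom = cfLM.ι ≫ L.M ◁ M.rcoact := by
    rw [reassoc_of% hrco]; simp
  have wA' : (cfR.ι ≫ cfLM.ι ▷ N.M ≫ (α_ L.M M.M N.M).hom) ≫ L.M ◁ (M.rcoact ▷ N.M)
      = (cfR.ι ≫ cfLM.ι ▷ N.M ≫ (α_ L.M M.M N.M).hom)
          ≫ L.M ◁ (M.M ◁ N.lcoact ≫ (α_ M.M C.X N.M).inv) := by
    calc (cfR.ι ≫ cfLM.ι ▷ N.M ≫ (α_ L.M M.M N.M).hom) ≫ L.M ◁ (M.rcoact ▷ N.M)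
        = cfR.ι ≫ (cfLM.ι ≫ L.M ◁ M.rcoact) ▷ N.M ≫ (α_ L.M (M.M ≫ C.X) N.M).hom := by
          bicategory
      _ = cfR.ι ≫ (rco ≫ cfLM.ι ▷ C.X ≫ (α_ L.M M.M C.X).hom) ▷ N.M
            ≫ (α_ L.M (M.M ≫ C.X) N.M).hom := by
          rw [hrco']
      _ = cfR.ι ≫ rco ▷ N.M ≫ (α_ cfLM.pt C.X N.M).hom ≫ cfLM.ι ▷ (C.X ≫ N.M)
            ≫ (α_ L.M M.M (C.X ≫ N.M)).hom ≫ L.M ◁ (α_ M.M C.X N.M).inv := by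
          bicategory
      _ = cfR.ι ≫ cfLM.pt ◁ N.lcoact ≫ (α_ cfLM.pt C.X N.M).inv
            ≫ (α_ cfLM.pt C.X N.M).hom ≫ cfLM.ι ▷ (C.X ≫ N.M)
            ≫ (α_ L.M M.M (C.X ≫ N.M)).hom ≫ L.M ◁ (α_ M.M C.X N.M).inv := by
          rw [reassoc_of% w4]
      _ = cfR.ι ≫ cfLM.pt ◁ N.lcoact ≫ cfLM.ι ▷ (C.X ≫ N.M)
            ≫ (α_ L.M M.M (C.X ≫ N.M)).hom ≫ L.M ◁ (α_ M.M C.X N.M).inv := by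
          simp only [Iso.inv_hom_id_assoc]
      _ = cfR.ι ≫ cfLM.ι ▷ N.M ≫ (L.M ≫ M.M) ◁ N.lcoact
            ≫ (α_ L.M M.M (C.X ≫ N.M)).hom ≫ L.M ◁ (α_ M.M C.X N.M).inv := by
          rw [← reassoc_of% he2]
      _ = (cfR.ι ≫ cfLM.ι ▷ N.M ≫ (α_ L.M M.M N.M).hom)
            ≫ L.M ◁ (M.M ◁ N.lcoact ≫ (α_ M.M C.X N.M).inv) := by
          bicategory
  obtain ⟨g₂, hg₂⟩ :=
    Fork.IsLimit.lift' l2 (cfR.ι ≫ cfLM.ι ▷ N.M ≫ (α_ L.M M.M N.M).hom) wA'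
  change cfR.pt ⟶ L.M ≫ cfMN.pt at g₂
  have hg₂' : g₂ ≫ L.M ◁ cfMN.ι
      = cfR.ι ≫ cfLM.ι ▷ N.M ≫ (α_ L.M M.M N.M).hom := hg₂
  -- Claim B'
  have wB' : g₂ ≫ L.rcoact ▷ cfMN.pt
      = g₂ ≫ (L.M ◁ lco ≫ (α_ L.M C'.X cfMN.pt).inv) := by
    haveI := m3
    rw [← cancel_mono ((L.M ≫ C'.X) ◁ cfMN.ι)]
    calc (g₂ ≫ L.rcoact ▷ cfMN.pt) ≫ (L.M ≫ C'.X) ◁ cfMN.ι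
        = g₂ ≫ L.M ◁ cfMN.ι ≫ L.rcoact ▷ (M.M ≫ N.M) := by
          rw [Category.assoc, ← he]
      _ = cfR.ι ≫ cfLM.ι ▷ N.M ≫ (α_ L.M M.M N.M).hom ≫ L.rcoact ▷ (M.M ≫ N.M) := by
          rw [reassoc_of% hg₂']
      _ = cfR.ι ≫ (cfLM.ι ≫ L.rcoact ▷ M.M) ▷ N.M ≫ (α_ (L.M ≫ C'.X) M.M N.M).hom := by
          bicategory
      _ = cfR.ι ≫ (cfLM.ι ≫ L.M ◁ M.lcoact ≫ (α_ L.M C'.X M.M).inv) ▷ N.M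
            ≫ (α_ (L.M ≫ C'.X) M.M N.M).hom := by
          rw [w2]
      _ = cfR.ι ≫ cfLM.ι ▷ N.M ≫ (α_ L.M M.M N.M).hom ≫ L.M ◁ (M.lcoact ▷ N.M)
            ≫ L.M ◁ (α_ C'.X M.M N.M).hom ≫ (α_ L.M C'.X (M.M ≫ N.M)).inv := by
          bicategory
      _ = g₂ ≫ L.M ◁ cfMN.ι ≫ L.M ◁ (M.lcoact ▷ N.M)
            ≫ L.M ◁ (α_ C'.X M.M N.M).hom ≫ (α_ L.M C'.X (M.M ≫ N.M)).inv := by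
          rw [← reassoc_of% hg₂']
      _ = g₂ ≫ L.M ◁ (cfMN.ι ≫ M.lcoact ▷ N.M ≫ (α_ C'.X M.M N.M).hom)
            ≫ (α_ L.M C'.X (M.M ≫ N.M)).inv := by
          simp only [Bicategory.whiskerLeft_comp, Category.assoc]
      _ = g₂ ≫ L.M ◁ (lco ≫ C'.X ◁ cfMN.ι) ≫ (α_ L.M C'.X (M.M ≫ N.M)).inv := by
          rw [← hlco]
      _ = (g₂ ≫ (L.M ◁ lco ≫ (α_ L.M C'.X cfMN.pt).inv)) ≫ (L.M ≫ C'.X) ◁ cfMN.ι := by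
          bicategory
  obtain ⟨ψ, hψ⟩ := Fork.IsLimit.lift' cfL.isLimit g₂ wB'
  have hψ' : ψ ≫ cfL.ι = g₂ := hψ
  -- the two composites are the identity
  have hom_inv : φh ≫ ψ = 𝟙 cfL.pt := by
    apply Fork.IsLimit.hom_ext cfL.isLimit
    haveI := m2
    rw [← cancel_mono (L.M ◁ cfMN.ι)]
    show ((φh ≫ ψ) ≫ cfL.ι) ≫ L.M ◁ cfMN.ι = (𝟙 _ ≫ cfL.ι) ≫ L.M ◁ cfMN.ι
    simp only [Category.assoc, Category.id_comp]
    rw [reassoc_of% hψ', hg₂', reassoc_of% hφh', reassoc_of% hg₁']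
    simp
  have inv_hom : ψ ≫ φh = 𝟙 cfR.pt := by
    apply Fork.IsLimit.hom_ext cfR.isLimit
    haveI := m6
    rw [← cancel_mono (cfLM.ι ▷ N.M)]
    show ((ψ ≫ φh) ≫ cfR.ι) ≫ cfLM.ι ▷ N.M = (𝟙 _ ≫ cfR.ι) ≫ cfLM.ι ▷ N.M
    simp only [Category.assoc, Category.id_comp]
    rw [reassoc_of% hφh', hg₁', reassoc_of% hψ', reassoc_of% hg₂']
    simp
  refine ⟨⟨φh, ψ, hom_inv, inv_hom⟩, ?_⟩
  show φh ≫ cfR.ι ≫ cfLM.ι ▷ N.M = _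
  rw [reassoc_of% hφh', hg₁']

end CoringSep
end
end

section
/- Let F: (right C-comodules) → (right D-comodules) be a K-linear functor preserving coproducts, and T, S K-algebras. For X a right S-module, Y an S-T-bimodule, and M a (T,C)-bicomodule, the composition formula Υ_{X, Y ⊗_T M} ∘ (X ⊗_S Υ_{Y,M}) = Υ_{X ⊗_S Y, M} holds. -/
/-! # Preamble: corings and comodules
We follow "Separable functors in corings" (J. Gómez-Torrecillas).
`K`-algebras are monoid objects in `ModuleCat K`; a `T`-`A`-bimodule is a
1-morphism `T ⟶ A` in the bicategory of algebras and bimodules, whose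
composition is the tensor product over the middle algebra. -/

open CategoryTheory Limits Bicategory

noncomputable section
universe u

namespace CoringSep

variable (K : Type u) [CommRing K]

variable {K}

variable {a b s t : Alg K}

variable {C : Coring a}

@[simp] lemma bimod_comp_hom {x y : Alg K} {M N P : x ⟶ y} (f : M ⟶ N) (g : N ⟶ P) :
    (f ≫ g).hom = f.hom ≫ g.hom := rfl

@[simp] lemma bimod_id_hom {x y : Alg K} (M : x ⟶ y) :
    Bimod.Hom.hom (𝟙 M) = 𝟙 M.X := rfl

end CoringSep
namespace CoringSep
open CategoryTheory Limits Bicategory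

variable {K : Type u} [CommRing K] {a b s t : Alg K} {C : Coring a} {D : Coring b}

/-- The right `D`-comodule `X ⊗_A N` obtained by tensoring a right `D`-comodule
`N` (with underlying `A`-`B`-bimodule) by a `T`-`A`-bimodule `X`. -/
def lextendObj (X : t ⟶ a) (N : RightComodule a D) : RightComodule t D where
  M := X ≫ N.M
  coact := X ◁ N.coact ≫ (α_ X N.M D.X).inv
  coassoc := by
    have hc : (α_ X (N.M ≫ D.X) D.X).inv ≫ (α_ X N.M D.X).inv ▷ D.X ≫
        (α_ (X ≫ N.M) D.X D.X).hom =
        X ◁ (α_ N.M D.X D.X).hom ≫ (α_ X N.M (D.X ≫ D.X)).inv := by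
      bicategory_coherence
    simp only [Bicategory.comp_whiskerRight, Bicategory.whisker_assoc,
      Bicategory.comp_whiskerLeft, Category.assoc, Iso.inv_hom_id_assoc]
    rw [hc, ← Bicategory.whiskerLeft_comp_assoc, ← Bicategory.whiskerLeft_comp_assoc,
      Category.assoc, N.coassoc]
    simp only [Bicategory.whiskerLeft_comp, Category.assoc]
  counit := by
    simp only [Bicategory.comp_whiskerLeft, Category.assoc, Iso.inv_hom_id_assoc]
    rw [← whiskerLeft_rightUnitor]
    simp only [← Bicategory.whiskerLeft_comp, Category.assoc]
    rw [N.counit]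
    simp
end CoringSep

namespace CoringSep
open CategoryTheory Limits Bicategory

variable {K : Type u} [CommRing K] {a b s t : Alg K} {C : Coring a} {D : Coring b}

/-- The functor `- ⊗_A N : Mod-(T,A) ⥤ Comod-(T,D)` induced by a right
`D`-comodule `N` with underlying `A`-`B`-bimodule. -/
def lextendF (t : Alg K) (N : RightComodule a D) : (t ⟶ a) ⥤ RightComodule t D where
  obj X := lextendObj X N
  map {X Y} f :=
    ⟨f ▷ N.M, by
      dsimp [lextendObj]
      rw [Category.assoc, ← associator_inv_naturality_left, whisker_exchange_assoc]⟩
  map_id X := by ext; simp [lextendObj]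
  map_comp f g := by ext; simp [lextendObj]

end CoringSep

namespace CoringSep
open CategoryTheory Limits

section Helpers
open MonoidalCategory
variable {K : Type u} [CommRing K]

lemma triv_one_act (X : ModuleCat.{u} K) :
    ((𝟙 (𝟙_ (ModuleCat K))) ▷ X) ≫ (λ_ X).hom = (λ_ X).hom := by simp

lemma triv_left_assoc (X : ModuleCat.{u} K) :
    ((λ_ (𝟙_ (ModuleCat K))).hom ▷ X) ≫ (λ_ X).hom =
      (α_ (𝟙_ (ModuleCat K)) (𝟙_ (ModuleCat K)) X).hom ≫
        ((𝟙_ (ModuleCat K)) ◁ (λ_ X).hom) ≫ (λ_ X).hom := by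
  coherence

lemma triv_middle_assoc {Y : ModuleCat.{u} K} (X : ModuleCat.{u} K) (act : X ⊗ Y ⟶ X) :
    ((λ_ X).hom ▷ Y) ≫ act =
      (α_ (𝟙_ (ModuleCat K)) X Y).hom ≫ ((𝟙_ (ModuleCat K)) ◁ act) ≫ (λ_ X).hom := by
  rw [MonoidalCategory.leftUnitor_naturality, MonoidalCategory.leftUnitor_tensor_hom]
  simp

lemma triv_nat {X Y : ModuleCat.{u} K} (f : X ⟶ Y) :
    (λ_ X).hom ≫ f = ((𝟙_ (ModuleCat K)) ◁ f) ≫ (λ_ Y).hom :=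
  (MonoidalCategory.leftUnitor_naturality f).symm

end Helpers

variable {K : Type u} [CommRing K] {a t t' : Alg K}

lemma base_actLeft (P : base K ⟶ t') :
    P.actLeft = (MonoidalCategory.leftUnitor P.X).hom := by
  have h := P.one_actLeft
  rw [← h]
  change _ = MonoidalCategoryStruct.whiskerRight (𝟙 _) P.X ≫ _
  simp

/-- Forgetting the left `T`-action of a `T`-`A`-bimodule: restriction of
scalars along `K → T`. -/
def resBase (t a : Alg K) : (t ⟶ a) ⥤ (base K ⟶ a) where
  obj M :=
    { X := M.X
      actLeft := (MonoidalCategory.leftUnitor M.X).hom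
      one_actLeft := triv_one_act M.X
      left_assoc := triv_left_assoc M.X
      actRight := M.actRight
      actRight_one := M.actRight_one
      right_assoc := M.right_assoc
      middle_assoc := triv_middle_assoc M.X M.actRight }
  map f := { hom := f.hom
             left_act_hom := triv_nat f.hom
             right_act_hom := f.right_act_hom }
  map_id _ := rfl
  map_comp _ _ := rfl


variable {C : Coring a}

/-- The coaction of a `(T,C)`-bicomodule, as a morphism of the underlying
plain bimodules. -/
def resCoact (M : RightComodule t C) :
    (resBase t a).obj M.M ⟶ (resBase t a).obj M.M ≫ C.X where
  hom := M.coact.hom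
  left_act_hom := by
    rw [base_actLeft ((resBase t a).obj M.M ≫ C.X)]
    exact triv_nat M.coact.hom
  right_act_hom := M.coact.right_act_hom

/-- A comodule morphism, restricted. -/
def resMap {M N : RightComodule t C} (f : M ⟶ N) :
    (resBase t a).obj M.M ⟶ (resBase t a).obj N.M where
  hom := f.f.hom
  left_act_hom := triv_nat f.f.hom
  right_act_hom := f.f.right_act_hom

set_option maxHeartbeats 1600000 in
/-- Forgetting the left `T`-action of a `(T,C)`-bicomodule: the underlying
plain right `C`-comodule. -/
def resComod (t : Alg K) (C : Coring a) : RightComodule t C ⥤ Comod C where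
  obj M :=
    { M := (resBase t a).obj M.M
      coact := resCoact M
      coassoc := by
        apply Bimod.hom_ext
        show (M.coact ≫ M.coact ▷ C.X ≫ (α_ M.M C.X C.X).hom).hom =
          (M.coact ≫ M.M ◁ C.comul).hom
        exact congrArg Bimod.Hom.hom M.coassoc
      counit := by
        apply Bimod.hom_ext
        show (M.coact ≫ M.M ◁ C.counit ≫ (ρ_ M.M).hom).hom = Bimod.Hom.hom (𝟙 M.M)
        exact congrArg Bimod.Hom.hom M.counit }
  map {M N} f := ⟨resMap f, by
    apply Bimod.hom_ext
    show (M.coact ≫ f.f ▷ C.X).hom = (f.f ≫ N.coact).hom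
    exact congrArg Bimod.Hom.hom f.colinear⟩
  map_id _ := rfl
  map_comp _ _ := rfl

end CoringSep

namespace CoringSep
open CategoryTheory Limits Bicategory

variable {K : Type u} [CommRing K] {x y a t : Alg K} {C : Coring a}

/-- Sum of two bimodule morphisms. -/
def addB {M N : x ⟶ y} (f g : M ⟶ N) : M ⟶ N where
  hom := f.hom + g.hom
  left_act_hom := by simp [Preadditive.comp_add, Preadditive.add_comp]
  right_act_hom := by simp [Preadditive.comp_add, Preadditive.add_comp]

/-- Scalar multiple of a bimodule morphism. -/
def smulB {M N : x ⟶ y} (k : K) (f : M ⟶ N) : M ⟶ N where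
  hom := k • f.hom
  left_act_hom := by
    rw [Linear.comp_smul, MonoidalLinear.whiskerLeft_smul, Linear.smul_comp,
      f.left_act_hom]
  right_act_hom := by
    rw [Linear.comp_smul, MonoidalLinear.smul_whiskerRight, Linear.smul_comp,
      f.right_act_hom]

lemma addB_whiskerRight {M N : x ⟶ y} (f g : M ⟶ N) (P : y ⟶ a) :
    (addB f g) ▷ P = addB (f ▷ P) (g ▷ P) := by
  apply Bimod.hom_ext
  apply coequalizer.hom_ext
  simp [addB, Bicategory.whiskerRight, Bimod.whiskerRight, Preadditive.comp_add,
    Preadditive.add_comp, MonoidalPreadditive.add_whiskerRight]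
  erw [Preadditive.comp_add _ _ _ (coequalizer.π _ _)]
  simp only [coequalizer.π]
  erw [ι_colimMap, ι_colimMap, ι_colimMap]
  simp only [parallelPairHom_app_one]
  erw [Preadditive.add_comp]
  rfl

lemma smulB_whiskerRight {M N : x ⟶ y} (k : K) (f : M ⟶ N) (P : y ⟶ a) :
    (smulB k f) ▷ P = smulB k (f ▷ P) := by
  apply Bimod.hom_ext
  apply coequalizer.hom_ext
  simp [smulB, Bicategory.whiskerRight, Bimod.whiskerRight, Linear.comp_smul,
    Linear.smul_comp, MonoidalLinear.smul_whiskerRight]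
  erw [Linear.comp_smul _ _ _ (coequalizer.π _ _)]
  simp only [coequalizer.π]
  erw [ι_colimMap, ι_colimMap]
  simp only [parallelPairHom_app_one]
  erw [Linear.smul_comp]
  rfl

/-- Sum of two comodule morphisms. -/
def addC {M N : RightComodule t C} (f g : M ⟶ N) : M ⟶ N where
  f := addB f.f g.f
  colinear := by
    rw [addB_whiskerRight]
    apply Bimod.hom_ext
    have h1 := congrArg Bimod.Hom.hom f.colinear
    have h2 := congrArg Bimod.Hom.hom g.colinear
    simp only [bimod_comp_hom] at h1 h2
    show M.coact.hom ≫ ((f.f ▷ C.X).hom + (g.f ▷ C.X).hom) =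
      (f.f.hom + g.f.hom) ≫ N.coact.hom
    rw [Preadditive.comp_add, Preadditive.add_comp, h1, h2]

/-- Scalar multiple of a comodule morphism. -/
def smulC {M N : RightComodule t C} (k : K) (f : M ⟶ N) : M ⟶ N where
  f := smulB k f.f
  colinear := by
    rw [smulB_whiskerRight]
    apply Bimod.hom_ext
    have h1 := congrArg Bimod.Hom.hom f.colinear
    simp only [bimod_comp_hom] at h1
    show M.coact.hom ≫ (k • (f.f ▷ C.X).hom) = (k • f.f.hom) ≫ N.coact.hom
    rw [Linear.comp_smul, Linear.smul_comp, h1]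

/-- A functor between comodule categories is `K`-linear if it preserves sums
and `K`-scalar multiples of morphisms. -/
def KLinearFunctor {a b : Alg K} {C : Coring a} {D : Coring b}
    (F : Comod C ⥤ Comod D) : Prop :=
  (∀ (X Y : Comod C) (f g : X ⟶ Y), F.map (addC f g) = addC (F.map f) (F.map g)) ∧
  (∀ (X Y : Comod C) (k : K) (f : X ⟶ Y), F.map (smulC k f) = smulC k (F.map f))

/-- A functor between comodule categories preserves coproducts if it preserves
all small coproduct colimits. -/
def PreservesCoproducts {a b : Alg K} {C : Coring a} {D : Coring b}
    (F : Comod C ⥤ Comod D) : Prop :=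
  ∀ (J : Type u) (f : J → Comod C), Nonempty (PreservesColimit (Discrete.functor f) F)

end CoringSep

namespace CoringSep
open CategoryTheory Limits Bicategory

variable {K : Type u} [CommRing K] {a b s t : Alg K} {C : Coring a} {D : Coring b}

/-- Left tensoring of a comodule morphism by a bimodule. -/
def lextendMap (X : s ⟶ t) {N N' : RightComodule t D} (h : N ⟶ N') :
    lextendObj X N ⟶ lextendObj X N' where
  f := X ◁ h.f
  colinear := by
    dsimp [lextendObj]
    rw [Category.assoc, ← associator_inv_naturality_middle]
    rw [← Bicategory.whiskerLeft_comp_assoc, h.colinear, Bicategory.whiskerLeft_comp_assoc]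

/-- The data of the canonical natural transformation
`Υ : - ⊗_T F(M) ⟶ F(- ⊗_T M)` attached to a `K`-linear coproduct-preserving
functor `F` between comodule categories and a `(T,C)`-bicomodule `M`: a left
`T`-module structure `FM` on `F(M)` together with a natural transformation
`Υ`, normalised at the regular module `T`. -/
structure HomNatData {a b t : Alg K} {C : Coring a} {D : Coring b}
    (F : Comod C ⥤ Comod D) (M : RightComodule t C) where
  /-- `F(M)` with its induced left `T`-action, as a `(T,D)`-bicomodule. -/
  FM : RightComodule t D
  hres : (resComod t D).obj FM = F.obj ((resComod t C).obj M)
  /-- the natural transformation `Υ_{-,M}` -/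
  Υ : lextendF (base K) FM ⟶ lextendF (base K) M ⋙ F
  /-- the canonical comparison `T ⊗_T M ≅ M` -/
  cM : lextendObj ((resBase t t).obj (𝟙 t)) M ⟶ (resComod t C).obj M
  hcM : cM.f.hom = (Bimod.leftUnitorBimod M.M).hom.hom
  cM_iso : IsIso cM
  /-- the canonical comparison `T ⊗_T F(M) ≅ F(M)` -/
  cFM : lextendObj ((resBase t t).obj (𝟙 t)) FM ⟶ (resComod t D).obj FM
  hcFM : cFM.f.hom = (Bimod.leftUnitorBimod FM.M).hom.hom
  cFM_iso : IsIso cFM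
  /-- normalisation: `Υ_{T,M}` is the canonical isomorphism
  `T ⊗_T F(M) ≅ F(M) ≅ F(T ⊗_T M)`. -/
  norm : Υ.app ((resBase t t).obj (𝟙 t)) =
    cFM ≫ eqToHom hres ≫ F.map (CategoryTheory.inv cM)

end CoringSep

namespace CoringSep
open CategoryTheory Limits Bicategory


section Statement8Aux
open CategoryTheory.MonoidalCategory
variable {K : Type u} [CommRing K] {a b s t x y z w : Alg K}

/-! ### Elementwise toolkit for `Bimod` over `ModuleCat K` -/

/-- π for the tensor product of bimodules. -/
abbrev piB (P : x ⟶ y) (Q : y ⟶ z) : (P.X ⊗ Q.X : ModuleCat K) ⟶ (P ≫ Q).X :=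
  coequalizer.π _ _

lemma piB_actLeft (P : x ⟶ y) (Q : y ⟶ z) (a₀ : x.val.X) (p : P.X) (q : Q.X) :
    (P ≫ Q).actLeft (a₀ ⊗ₜ piB P Q (p ⊗ₜ q)) = piB P Q (P.actLeft (a₀ ⊗ₜ p) ⊗ₜ q) := by
  have h := Bimod.TensorBimod.whiskerLeft_π_actLeft P Q
  have := ConcreteCategory.congr_hom h (a₀ ⊗ₜ (p ⊗ₜ q))
  exact this


lemma piB_actRight (P : x ⟶ y) (Q : y ⟶ z) (p : P.X) (q : Q.X) (v : z.val.X) :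
    (P ≫ Q).actRight (piB P Q (p ⊗ₜ q) ⊗ₜ v) = piB P Q (p ⊗ₜ Q.actRight (q ⊗ₜ v)) := by
  have h := Bimod.TensorBimod.π_tensor_id_actRight P Q
  have := ConcreteCategory.congr_hom h ((p ⊗ₜ q) ⊗ₜ v)
  exact this

lemma piB_whiskerRight {P P' : x ⟶ y} (f : P ⟶ P') (Q : y ⟶ z) (p : P.X) (q : Q.X) :
    (f ▷ Q).hom (piB P Q (p ⊗ₜ q)) = piB P' Q (f.hom p ⊗ₜ q) := by
  have h : piB P Q ≫ (f ▷ Q).hom = (f.hom ▷ Q.X) ≫ piB P' Q := by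
    simp [Bicategory.whiskerRight, Bimod.whiskerRight]
    exact ι_colimMap _ _
  have := ConcreteCategory.congr_hom h (p ⊗ₜ q)
  simpa [ModuleCat.comp_apply, ModuleCat.MonoidalCategory.whiskerRight_apply] using this

lemma piB_whiskerLeft (P : x ⟶ y) {Q Q' : y ⟶ z} (g : Q ⟶ Q') (p : P.X) (q : Q.X) :
    (P ◁ g).hom (piB P Q (p ⊗ₜ q)) = piB P Q' (p ⊗ₜ g.hom q) := by
  have h : piB P Q ≫ (P ◁ g).hom = (P.X ◁ g.hom) ≫ piB P Q' := by
    simp [Bicategory.whiskerLeft, Bimod.whiskerLeft]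
    exact ι_colimMap _ _
  have := ConcreteCategory.congr_hom h (p ⊗ₜ q)
  simpa [ModuleCat.comp_apply, ModuleCat.MonoidalCategory.whiskerLeft_apply] using this

lemma piB_assoc (P : x ⟶ y) (Q : y ⟶ z) (R : z ⟶ w) (p : P.X) (q : Q.X) (r : R.X) :
    (α_ P Q R).hom.hom (piB (P ≫ Q) R (piB P Q (p ⊗ₜ q) ⊗ₜ r)) =
      piB P (Q ≫ R) (p ⊗ₜ piB Q R (q ⊗ₜ r)) := by
  have h1 : piB (P ≫ Q) R ≫ (α_ P Q R).hom.hom = Bimod.AssociatorBimod.homAux P Q R :=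
    coequalizer.π_desc _ _
  have h2 : (piB P Q ▷ R.X) ≫ Bimod.AssociatorBimod.homAux P Q R =
      (α_ P.X Q.X R.X).hom ≫ (P.X ◁ piB Q R) ≫ piB P (Q ≫ R) := by
    dsimp only [Bimod.AssociatorBimod.homAux]
    apply _root_.π_tensor_id_preserves_coequalizer_inv_desc
  have e1 := ConcreteCategory.congr_hom h1 (piB P Q (p ⊗ₜ q) ⊗ₜ r)
  have e2 := ConcreteCategory.congr_hom h2 ((p ⊗ₜ q) ⊗ₜ r)
  simp only [ModuleCat.comp_apply,
    ModuleCat.MonoidalCategory.whiskerRight_apply,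
    ModuleCat.MonoidalCategory.whiskerLeft_apply,
    ModuleCat.MonoidalCategory.associator_hom_apply] at e1
  rw [e1]
  exact e2

/-- epi-ness of `π ▷ W`. -/
lemma epi_piB_whiskerRight (P : x ⟶ y) (Q : y ⟶ z) (W : ModuleCat.{u} K) :
    Epi ((piB P Q) ▷ W) := by
  have hsurj : Function.Surjective (piB P Q) :=
    (ModuleCat.epi_iff_surjective (piB P Q)).1 (coequalizer.π_epi)
  rw [ModuleCat.epi_iff_surjective]
  intro v
  induction v using TensorProduct.induction_on with
  | zero => exact ⟨0, map_zero _⟩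
  | tmul c n =>
    obtain ⟨c', hc⟩ := hsurj c
    exact ⟨c' ⊗ₜ n, by rw [ModuleCat.MonoidalCategory.whiskerRight_apply, hc]⟩
  | add v₁ v₂ h₁ h₂ =>
    obtain ⟨w₁, hw₁⟩ := h₁; obtain ⟨w₂, hw₂⟩ := h₂
    exact ⟨w₁ + w₂, by rw [map_add, hw₁, hw₂]⟩

/-! ### The associator as a comodule morphism -/

variable {D : Coring b}

/-- The canonical associativity comparison as a morphism of comodules. -/
def assocComod (W : x ⟶ s) (Y : s ⟶ t) (N : RightComodule t D) :
    lextendObj (W ≫ Y) N ⟶ lextendObj W (lextendObj Y N) where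
  f := (α_ W Y N.M).hom
  colinear := by
    dsimp [lextendObj]
    have hc : (α_ (W ≫ Y) N.M D.X).inv ≫ ((α_ W Y N.M).hom ▷ D.X) =
        (α_ W Y (N.M ≫ D.X)).hom ≫ (W ◁ (α_ Y N.M D.X).inv) ≫
          (α_ W (Y ≫ N.M) D.X).inv := by
      bicategory_coherence
    rw [Category.assoc, hc, ← Category.assoc ((W ≫ Y) ◁ N.coact),
      Bicategory.associator_naturality_right]
    simp only [Bicategory.whiskerLeft_comp, Category.assoc]

lemma assocComod_naturality {W W' : x ⟶ s} (g : W ⟶ W') (Y : s ⟶ t)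
    (N : RightComodule t D) :
    (lextendF x N).map (g ▷ Y) ≫ assocComod W' Y N =
      assocComod W Y N ≫ (lextendF x (lextendObj Y N)).map g := by
  refine comodHom_ext' _ _ ?_
  show ((g ▷ Y) ▷ N.M) ≫ (α_ W' Y N.M).hom = (α_ W Y N.M).hom ≫ (g ▷ (Y ≫ N.M))
  exact Bicategory.associator_naturality_left g Y N.M

lemma lextendMap_exchange {W W' : x ⟶ s} (g : W ⟶ W')
    {N N' : RightComodule s D} (h : N ⟶ N') :
    (lextendF x N).map g ≫ lextendMap W' h = lextendMap W h ≫ (lextendF x N').map g := by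
  refine comodHom_ext' _ _ ?_
  show (g ▷ N.M) ≫ (W' ◁ h.f) = (W ◁ h.f) ≫ (g ▷ N'.M)
  exact (Bicategory.whisker_exchange g h.f).symm

/-- The regular right module with trivial left action. -/
abbrev regB (s : Alg K) : base K ⟶ s := (resBase s s).obj (𝟙 s)

/-- The right-module morphism `S ⟶ X` sending `1` to `v`. -/
def fxB (X : base K ⟶ s) (v : X.X) : regB s ⟶ X where
  hom := ModuleCat.ofHom ((X.actRight.hom : (X.X ⊗ s.val.X : ModuleCat K) →ₗ[K] X.X).comp
    ((TensorProduct.mk K X.X s.val.X) v))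
  left_act_hom := by
    rw [base_actLeft X]
    exact triv_nat _
  right_act_hom := by
    show (regB s).actRight ≫ _ = _
    apply ModuleCat.hom_ext
    apply TensorProduct.ext'
    intro u₁ u₂
    have h := ConcreteCategory.congr_hom X.right_assoc (v ⊗ₜ ((show s.val.X from u₁) ⊗ₜ u₂))
    exact h

lemma fxB_one (X : base K ⟶ s) (v : X.X) :
    (fxB X v).hom (MonObj.one (X := s.val.X) (1 : K)) = v := by
  have h := ConcreteCategory.congr_hom X.actRight_one (v ⊗ₜ (1 : K))
  show X.actRight (v ⊗ₜ[K] MonObj.one (X := s.val.X) (1 : K)) = v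
  exact h.trans ((TensorProduct.rid_tmul v (1 : K)).trans (one_smul K v))

/-- ext for maps out of `(A ⊗ B) ⊗ C`. -/
lemma ext3 {A B C T : ModuleCat.{u} K} {f g : ((A ⊗ B) ⊗ C : ModuleCat K) ⟶ T}
    (h : ∀ (a₀ : A) (b₀ : B) (c₀ : C), f ((a₀ ⊗ₜ b₀) ⊗ₜ c₀) = g ((a₀ ⊗ₜ b₀) ⊗ₜ c₀)) :
    f = g := by
  apply ModuleCat.hom_ext
  apply TensorProduct.ext'
  intro ab c₀
  induction ab using TensorProduct.induction_on with
  | zero => rw [TensorProduct.zero_tmul, map_zero, map_zero]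
  | tmul a₀ b₀ => exact h a₀ b₀ c₀
  | add u₁ u₂ h₁ h₂ => rw [TensorProduct.add_tmul, map_add, map_add, h₁, h₂]

/-- ext for maps out of `(P ⊗_y Q) ⊗ W`. -/
lemma tensor_coeq_hom_ext {P : x ⟶ y} {Q : y ⟶ z} {W T : ModuleCat.{u} K}
    {f g : ((P ≫ Q).X ⊗ W : ModuleCat K) ⟶ T}
    (h : ∀ (p : P.X) (q : Q.X) (w₀ : W),
      f (piB P Q (p ⊗ₜ q) ⊗ₜ w₀) = g (piB P Q (p ⊗ₜ q) ⊗ₜ w₀)) : f = g := by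
  haveI := epi_piB_whiskerRight P Q W
  refine (cancel_epi ((piB P Q) ▷ W)).1 ?_
  exact ext3 fun p q w₀ => h p q w₀

/-- underlying map of the left-unitor comparison. -/
def lamYhom (Y : s ⟶ t) : ((regB s ≫ Y).X : ModuleCat K) ⟶ Y.X :=
  coequalizer.desc Y.actLeft (by
    show (MonObj.mul (X := s.val.X) ▷ Y.X) ≫ Y.actLeft = _
    rw [Y.left_assoc, ← Category.assoc]
    rfl)

lemma lamYhom_apply (Y : s ⟶ t) (u₀ : s.val.X) (q : Y.X) :
    lamYhom Y (piB (regB s) Y (u₀ ⊗ₜ q)) = Y.actLeft (u₀ ⊗ₜ q) :=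
  ConcreteCategory.congr_hom (coequalizer.π_desc _ _ : piB (regB s) Y ≫ lamYhom Y = Y.actLeft)
    (u₀ ⊗ₜ q)

/-- The left-unitor comparison `S ⊗_S Y ⟶ Y` as a morphism of right modules. -/
def lamYB (Y : s ⟶ t) : (regB s ≫ Y) ⟶ (resBase s t).obj Y where
  hom := lamYhom Y
  left_act_hom := by
    rw [base_actLeft (regB s ≫ Y)]
    exact triv_nat _
  right_act_hom := by
    apply tensor_coeq_hom_ext
    intro p q w₀
    show lamYhom Y ((regB s ≫ Y).actRight (piB (regB s) Y (p ⊗ₜ q) ⊗ₜ w₀)) =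
      Y.actRight (lamYhom Y (piB (regB s) Y (p ⊗ₜ q)) ⊗ₜ w₀)
    rw [piB_actRight]
    erw [lamYhom_apply, lamYhom_apply]
    have hma := ConcreteCategory.congr_hom Y.middle_assoc (((show s.val.X from p) ⊗ₜ q) ⊗ₜ w₀)
    exact hma.symm

lemma lamYB_apply (Y : s ⟶ t) (u₀ : s.val.X) (q : Y.X) :
    (lamYB Y).hom (piB (regB s) Y (u₀ ⊗ₜ q)) = Y.actLeft (u₀ ⊗ₜ q) := by
  exact lamYhom_apply Y u₀ q

lemma leftUnitorBimod_hom_apply (Q : s ⟶ t) (u₀ : s.val.X) (q : Q.X) :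
    (Bimod.leftUnitorBimod Q).hom.hom (piB (regB s) Q (u₀ ⊗ₜ q)) = Q.actLeft (u₀ ⊗ₜ q) := by
  have h : piB (regB s) Q ≫ (Bimod.leftUnitorBimod Q).hom.hom = Q.actLeft :=
    coequalizer.π_desc _ _
  exact ConcreteCategory.congr_hom h (u₀ ⊗ₜ q)

lemma comod_eqToHom_f_hom {C : Coring a} {M N : RightComodule t C} (h : M = N) :
    (eqToHom h).f.hom = eqToHom (congrArg (fun P : RightComodule t C => P.M.X) h) := by
  cases h; rfl

lemma moduleCat_eqToHom_apply {A B : ModuleCat.{u} K} (h : A = B) (m : A) :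
    (eqToHom h) m = cast (congrArg (fun M : ModuleCat K => M.carrier) h) m := by
  cases h; rfl

/-- reduction to the "free" part: the maps `S ⊗ N → X ⊗ N` induced by elements of `X`
are jointly epimorphic. -/
lemma jointly_epi {D : Coring b} (X : base K ⟶ s) (Y : s ⟶ t)
    (N : RightComodule t D) {Z : Comod D} {L R : lextendObj (X ≫ Y) N ⟶ Z}
    (h : ∀ v : X.X, (lextendF (base K) N).map ((fxB X v) ▷ Y) ≫ L
        = (lextendF (base K) N).map ((fxB X v) ▷ Y) ≫ R) : L = R := by
  refine comodHom_ext' _ _ (Bimod.hom_ext _ _ ?_)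
  apply coequalizer.hom_ext
  apply tensor_coeq_hom_ext
  intro xx yy n
  have hv2 : (((fxB X xx) ▷ Y) ▷ N.M).hom ≫ L.f.hom
      = (((fxB X xx) ▷ Y) ▷ N.M).hom ≫ R.f.hom :=
    congrArg (fun φ : lextendObj (regB s ≫ Y) N ⟶ Z => φ.f.hom) (h xx)
  have he := ConcreteCategory.congr_hom hv2
    (piB (regB s ≫ Y) N.M (piB (regB s) Y ((MonObj.one (X := s.val.X) (1 : K)) ⊗ₜ yy) ⊗ₜ n))
  have key : (((fxB X xx) ▷ Y) ▷ N.M).hom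
      (piB (regB s ≫ Y) N.M (piB (regB s) Y ((MonObj.one (X := s.val.X) (1 : K)) ⊗ₜ yy) ⊗ₜ n))
      = piB (X ≫ Y) N.M (piB X Y (xx ⊗ₜ yy) ⊗ₜ n) := by
    rw [piB_whiskerRight]
    erw [piB_whiskerRight, fxB_one]
  show L.f.hom (piB (X ≫ Y) N.M (piB X Y (xx ⊗ₜ yy) ⊗ₜ n))
      = R.f.hom (piB (X ≫ Y) N.M (piB X Y (xx ⊗ₜ yy) ⊗ₜ n))
  rw [← key]
  exact he

end Statement8Aux

/-- Let `F : Comod-C ⥤ Comod-D` be a `K`-linear functor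
preserving coproducts, `T, S` `K`-algebras, `X` a right `S`-module, `Y` an
`S`-`T`-bimodule and `M` a `(T,C)`-bicomodule.  Then, modulo the canonical
associativity identifications, `Υ_{X, Y ⊗_T M} ∘ (X ⊗_S Υ_{Y,M}) = Υ_{X ⊗_S Y, M}`,
where `Υ_{Y,M}` is the `(S,D)`-bicomodule morphism
`Y ⊗_T F(M) ⟶ F(Y ⊗_T M)` determined by `Υ` on the underlying modules. -/
theorem statement8 {K : Type u} [CommRing K] {a b s t : Alg K}
    {C : Coring a} {D : Coring b}
    (F : Comod C ⥤ Comod D) (hlin : KLinearFunctor F) (hco : PreservesCoproducts F)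
    (X : base K ⟶ s) (Y : s ⟶ t) (M : RightComodule t C)
    (dM : HomNatData F M) (dYM : HomNatData F (lextendObj Y M))
    (Υb : lextendObj Y dM.FM ⟶ dYM.FM)
    (e₁ : (resComod s D).obj (lextendObj Y dM.FM) =
      lextendObj ((resBase s t).obj Y) dM.FM)
    (e₂ : lextendObj ((resBase s t).obj Y) M = (resComod s C).obj (lextendObj Y M))
    (hΥb : (resComod s D).map Υb =
      eqToHom e₁ ≫ dM.Υ.app ((resBase s t).obj Y) ≫ F.map (eqToHom e₂) ≫
        eqToHom dYM.hres.symm)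
    (aF : lextendObj (X ≫ Y) dM.FM ⟶ lextendObj X (lextendObj Y dM.FM))
    (haF : aF.f = (α_ X Y dM.FM.M).hom)
    (aM : lextendObj (X ≫ Y) M ⟶ lextendObj X (lextendObj Y M))
    (haM : aM.f = (α_ X Y M.M).hom) :
    aF ≫ lextendMap X Υb ≫ dYM.Υ.app X = dM.Υ.app (X ≫ Y) ≫ F.map aM := by
  -- replace the given associators by the canonical ones
  have haF' : aF = assocComod X Y dM.FM := comodHom_ext' _ _ haF
  have haM' : aM = assocComod X Y M := comodHom_ext' _ _ haM
  rw [haF', haM']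
  -- Claim (A): compatibility of the associator with the canonical comparison `cM`.
  have claimA : assocComod (regB s) Y M ≫ dYM.cM
      = (lextendF (base K) M).map (lamYB Y) ≫ eqToHom e₂ := by
    refine comodHom_ext' _ _ (Bimod.hom_ext _ _ ?_)
    apply coequalizer.hom_ext
    apply tensor_coeq_hom_ext
    intro u₀ yy m
    show dYM.cM.f.hom ((α_ (regB s) Y M.M).hom.hom
        (piB (regB s ≫ Y) M.M (piB (regB s) Y (u₀ ⊗ₜ yy) ⊗ₜ m)))
      = (eqToHom e₂).f.hom (((lamYB Y) ▷ M.M).hom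
        (piB (regB s ≫ Y) M.M (piB (regB s) Y (u₀ ⊗ₜ yy) ⊗ₜ m)))
    rw [piB_assoc, dYM.hcM]
    refine (leftUnitorBimod_hom_apply (lextendObj Y M).M u₀ _).trans
      ((piB_actLeft Y M.M u₀ yy m).trans ?_)
    have hl : (lamYB Y).hom (piB (regB s) Y (u₀ ⊗ₜ yy)) =
        Y.actLeft ((show s.val.X from u₀) ⊗ₜ yy) := lamYB_apply Y u₀ yy
    rw [piB_whiskerRight, hl, comod_eqToHom_f_hom]
    erw [moduleCat_eqToHom_apply]
    rfl
  -- Claim (B): compatibility of `Υb` with the canonical comparison `cFM`.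
  have claimB : assocComod (regB s) Y dM.FM ≫ lextendMap (regB s) Υb ≫ dYM.cFM
      = (lextendF (base K) dM.FM).map (lamYB Y) ≫ eqToHom e₁.symm ≫
          (resComod s D).map Υb := by
    refine comodHom_ext' _ _ (Bimod.hom_ext _ _ ?_)
    apply coequalizer.hom_ext
    apply tensor_coeq_hom_ext
    intro u₀ yy n
    show dYM.cFM.f.hom (((regB s) ◁ Υb.f).hom ((α_ (regB s) Y dM.FM.M).hom.hom
        (piB (regB s ≫ Y) dM.FM.M (piB (regB s) Y (u₀ ⊗ₜ yy) ⊗ₜ n))))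
      = ((resComod s D).map Υb).f.hom ((eqToHom e₁.symm).f.hom (((lamYB Y) ▷ dM.FM.M).hom
        (piB (regB s ≫ Y) dM.FM.M (piB (regB s) Y (u₀ ⊗ₜ yy) ⊗ₜ n))))
    rw [piB_assoc, dYM.hcFM]
    have hwl : ((regB s) ◁ Υb.f).hom
        (piB (regB s) (Y ≫ dM.FM.M) (u₀ ⊗ₜ piB Y dM.FM.M (yy ⊗ₜ n)))
        = piB (regB s) dYM.FM.M (u₀ ⊗ₜ Υb.f.hom (piB Y dM.FM.M (yy ⊗ₜ n))) :=
      piB_whiskerLeft (regB s) Υb.f u₀ _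
    rw [hwl]
    have hla := ConcreteCategory.congr_hom Υb.f.left_act_hom
      (u₀ ⊗ₜ (piB Y dM.FM.M (yy ⊗ₜ n)))
    refine (leftUnitorBimod_hom_apply dYM.FM.M u₀ _).trans (hla.symm.trans
      ((congrArg Υb.f.hom (piB_actLeft Y dM.FM.M u₀ yy n)).trans ?_))
    have hl : (lamYB Y).hom (piB (regB s) Y (u₀ ⊗ₜ yy)) =
        Y.actLeft ((show s.val.X from u₀) ⊗ₜ yy) := lamYB_apply Y u₀ yy
    rw [piB_whiskerRight, hl, comod_eqToHom_f_hom]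
    erw [moduleCat_eqToHom_apply]
    rfl
  -- normalisation at the regular module
  haveI : IsIso dYM.cM := dYM.cM_iso
  have hnorm : dYM.Υ.app (regB s) ≫ F.map dYM.cM = dYM.cFM ≫ eqToHom dYM.hres := by
    rw [dYM.norm]
    erw [Category.assoc, Category.assoc, ← F.map_comp, IsIso.inv_hom_id, F.map_id, Category.comp_id]
    rfl
  have hups : dM.Υ.app ((resBase s t).obj Y) ≫ F.map (eqToHom e₂) =
      eqToHom e₁.symm ≫ (resComod s D).map Υb ≫ eqToHom dYM.hres := by
    rw [hΥb]
    simp only [Category.assoc, eqToHom_trans_assoc, eqToHom_trans, eqToHom_refl, Category.comp_id,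
      Category.id_comp]
    erw [Category.assoc, Category.assoc, eqToHom_trans, eqToHom_refl, Category.comp_id]
    rfl
  have natlam : (lextendF (base K) dM.FM).map (lamYB Y) ≫ dM.Υ.app ((resBase s t).obj Y)
      = dM.Υ.app (regB s ≫ Y) ≫ F.map ((lextendF (base K) M).map (lamYB Y)) :=
    dM.Υ.naturality (lamYB Y)
  -- the base case of the composition formula
  have star : assocComod (regB s) Y dM.FM ≫ lextendMap (regB s) Υb ≫ dYM.Υ.app (regB s) =
      dM.Υ.app (regB s ≫ Y) ≫ F.map (assocComod (regB s) Y M) := by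
    refine (cancel_mono (F.map dYM.cM)).1 ?_
    refine ((Category.assoc _ _ _).trans (congrArg (assocComod (regB s) Y dM.FM ≫ ·)
      (Category.assoc _ _ _))).trans ?_
    refine (congrArg (fun z => assocComod (regB s) Y dM.FM ≫ lextendMap (regB s) Υb ≫ z)
      hnorm).trans ?_
    refine ((Category.assoc (assocComod (regB s) Y dM.FM) _ _).trans
      (congrArg (assocComod (regB s) Y dM.FM ≫ ·)
        (Category.assoc (lextendMap (regB s) Υb) dYM.cFM _))).symm.trans ?_
    refine (congrArg (· ≫ eqToHom dYM.hres) claimB).trans ?_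
    refine ((Category.assoc _ _ _).trans (congrArg ((lextendF (base K) dM.FM).map (lamYB Y) ≫ ·)
      (Category.assoc _ _ _))).trans ?_
    refine (congrArg ((lextendF (base K) dM.FM).map (lamYB Y) ≫ ·) hups.symm).trans ?_
    refine (Category.assoc _ _ _).symm.trans ?_
    refine (congrArg (· ≫ F.map (eqToHom e₂)) natlam).trans ?_
    refine (Category.assoc _ _ _).trans ?_
    refine (congrArg (dM.Υ.app (regB s ≫ Y) ≫ ·)
      ((F.map_comp _ _).symm.trans (congrArg F.map claimA.symm))).trans ?_
    exact (congrArg (dM.Υ.app (regB s ≫ Y) ≫ ·) (F.map_comp _ _)).trans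
      (Category.assoc _ _ _).symm
  -- reduce to the base case using joint epimorphicity
  refine jointly_epi X Y dM.FM fun v => ?_
  have nat3 : (lextendF (base K) dYM.FM).map (fxB X v) ≫ dYM.Υ.app X
      = dYM.Υ.app (regB s) ≫ F.map ((lextendF (base K) (lextendObj Y M)).map (fxB X v)) :=
    dYM.Υ.naturality (fxB X v)
  have nat4 : (lextendF (base K) dM.FM).map ((fxB X v) ▷ Y) ≫ dM.Υ.app (X ≫ Y)
      = dM.Υ.app (regB s ≫ Y) ≫ F.map ((lextendF (base K) M).map ((fxB X v) ▷ Y)) :=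
    dM.Υ.naturality ((fxB X v) ▷ Y)
  refine (Category.assoc _ _ _).symm.trans ?_
  refine (congrArg (· ≫ lextendMap X Υb ≫ dYM.Υ.app X)
    (assocComod_naturality (fxB X v) Y dM.FM)).trans ?_
  refine (Category.assoc _ _ _).trans ?_
  refine (congrArg (assocComod (regB s) Y dM.FM ≫ ·) ((Category.assoc _ _ _).symm.trans
    ((congrArg (· ≫ dYM.Υ.app X) (lextendMap_exchange (fxB X v) Υb)).trans
    ((Category.assoc _ _ _).trans (congrArg (lextendMap (regB s) Υb ≫ ·) nat3))))).trans ?_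
  refine (congrArg (assocComod (regB s) Y dM.FM ≫ ·) (Category.assoc _ _ _).symm).trans ?_
  refine (Category.assoc _ _ _).symm.trans ?_
  refine (congrArg (· ≫ F.map ((lextendF (base K) (lextendObj Y M)).map (fxB X v))) star).trans ?_
  refine (Category.assoc _ _ _).trans ?_
  refine (congrArg (dM.Υ.app (regB s ≫ Y) ≫ ·) ((F.map_comp _ _).symm.trans
    (congrArg F.map (assocComod_naturality (fxB X v) Y M).symm))).trans ?_
  refine (congrArg (dM.Υ.app (regB s ≫ Y) ≫ ·) (F.map_comp _ _)).trans ?_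
  refine (Category.assoc _ _ _).symm.trans ?_
  refine (congrArg (· ≫ F.map (assocComod X Y M)) nat4.symm).trans ?_
  exact Category.assoc _ _ _

end CoringSep
end
end
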